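/- arXiv:2502.05126 — 3 statements merged into one kernel-verified Lean document; each statement's English description precedes it below -/
import Mathlib

section
/- Let n, d be positive integers with n ≥ 2, and let P_n be the path on n vertices. Then the induced matching number of the d-th power of P_n equals ⌊(n+d)/(d+2)⌋, i.e. im(P_n^d) = ⌊(n+d)/(d+2)⌋. -/
open MvPolynomial

/-- The `d`-th power of a simple graph `G`: vertices `u ≠ v` are adjacent iff
their distance in `G` is at most `d`. -/
def SimpleGraph.power {V : Type*} (G : SimpleGraph V) (d : ℕ) : SimpleGraph V where
  Adj u v := u ≠ v ∧ G.edist u v ≤ d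
  symm := by
    constructor
    rintro u v ⟨h1, h2⟩
    exact ⟨h1.symm, by rwa [SimpleGraph.edist_comm]⟩
  loopless := by constructor; rintro v ⟨h, -⟩; exact h rfl

/-- The edge ideal of the induced subgraph of `G` on a set `S` of vertices,
viewed inside `k[x_1,…,x_n]`. -/
noncomputable def inducedEdgeIdeal (k : Type) [Field k] {n : ℕ} (G : SimpleGraph (Fin n))
    (S : Set (Fin n)) : Ideal (MvPolynomial (Fin n) k) :=
  Ideal.span {m | ∃ a b, G.Adj a b ∧ a ∈ S ∧ b ∈ S ∧ m = X a * X b}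

/-- The edge ideal `I(G) = (x_i x_j : {i,j} ∈ E(G))` of a graph on vertex set
`{1,…,n}` (indexed by `Fin n`). -/
noncomputable def edgeIdeal (k : Type) [Field k] {n : ℕ} (G : SimpleGraph (Fin n)) :
    Ideal (MvPolynomial (Fin n) k) :=
  inducedEdgeIdeal k G Set.univ

/-- A finite graded free resolution of the submodule `P` of the `R`-module `M`,
where `R = k[x_1,…,x_n]` and `homog j ⊆ M` is the set of homogeneous elements of
degree `j` of `M`.  It consists of finite free modules `F i = (B i →₀ R)` whose
basis elements have internal degrees `deg i`, differentials `d i`, and an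
augmentation `aug : F 0 → M` with image `P`, such that the resulting complex is
exact and all maps are graded of degree `0`. -/
structure GradedFreeResolution (n : ℕ) (k : Type) [Field k]
    (M : Type) [AddCommGroup M] [Module (MvPolynomial (Fin n) k) M]
    (P : Submodule (MvPolynomial (Fin n) k) M) (homog : ℕ → Set M) where
  B : ℕ → Type
  finB : ∀ i, Finite (B i)
  deg : (i : ℕ) → B i → ℕ
  d : (i : ℕ) → (B (i + 1) →₀ MvPolynomial (Fin n) k) →ₗ[MvPolynomial (Fin n) k]
      (B i →₀ MvPolynomial (Fin n) k)
  aug : (B 0 →₀ MvPolynomial (Fin n) k) →ₗ[MvPolynomial (Fin n) k] M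
  range_aug : LinearMap.range aug = P
  exact_aug : Function.Exact (d 0) aug
  exact : ∀ i, Function.Exact (d (i + 1)) (d i)
  aug_graded : ∀ s : B 0, aug (Finsupp.single s 1) ∈ homog (deg 0 s)
  d_graded : ∀ (i : ℕ) (s : B (i + 1)) (b : B i),
    (d i (Finsupp.single s 1)) b = 0 ∨
      (deg i b ≤ deg (i + 1) s ∧
        (d i (Finsupp.single s 1)) b ∈
          homogeneousSubmodule (Fin n) k (deg (i + 1) s - deg i b))

/-- The Castelnuovo–Mumford regularity of the graded module `P ⊆ M` (with
homogeneity structure `homog`): the least `r` such that some graded free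
resolution has all of its `i`-th syzygy degrees at most `r + i`; this is
`max {j - i : β_{i,j} ≠ 0}`, which for finitely generated graded modules over
`k[x_1,…,x_n]` agrees with `max {i + j : H^i_m(M)_j ≠ 0}`. -/
noncomputable def gradedReg (n : ℕ) (k : Type) [Field k]
    (M : Type) [AddCommGroup M] [Module (MvPolynomial (Fin n) k) M]
    (P : Submodule (MvPolynomial (Fin n) k) M) (homog : ℕ → Set M) : ℤ :=
  sInf {r : ℤ | ∃ F : GradedFreeResolution n k M P homog,
    ∀ (i : ℕ) (b : F.B i), (F.deg i b : ℤ) - i ≤ r}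

/-- The Castelnuovo–Mumford regularity `reg (R/I)` of the quotient of
`R = k[x_1,…,x_n]` by a homogeneous ideal `I`. -/
noncomputable def regQuot (n : ℕ) (k : Type) [Field k]
    (I : Ideal (MvPolynomial (Fin n) k)) : ℤ :=
  gradedReg n k (MvPolynomial (Fin n) k ⧸ I) ⊤
    (fun j => (Ideal.Quotient.mk I) '' (homogeneousSubmodule (Fin n) k j))

/-- The Castelnuovo–Mumford regularity `reg I` of a homogeneous ideal
`I ⊆ R = k[x_1,…,x_n]`, viewed as a graded `R`-module. -/
noncomputable def regIdeal (n : ℕ) (k : Type) [Field k]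
    (I : Ideal (MvPolynomial (Fin n) k)) : ℤ :=
  gradedReg n k (MvPolynomial (Fin n) k) I
    (fun j => (homogeneousSubmodule (Fin n) k j : Set (MvPolynomial (Fin n) k)))

/-- The induced matching number of a simple graph: the largest number of edges
in a matching of `G` which is an induced subgraph of `G`. -/
noncomputable def indMatchNum {V : Type*} (G : SimpleGraph V) : ℕ :=
  sSup {m | ∃ M : G.Subgraph, M.IsMatching ∧ M.IsInduced ∧ M.edgeSet.ncard = m}

/-- The closed neighborhood `N_G[S]` of a set of vertices. -/
def closedNbhdSet {V : Type*} (G : SimpleGraph V) (S : Set V) : Set V :=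
  S ∪ {w | ∃ v ∈ S, G.Adj v w}

/-- The ideal generated by the variables `x_ℓ` with `ℓ` a neighbor of `v` not in `S`. -/
noncomputable def nbrIdeal (k : Type) [Field k] {n : ℕ} (G : SimpleGraph (Fin n))
    (v : Fin n) (S : Set (Fin n)) : Ideal (MvPolynomial (Fin n) k) :=
  Ideal.span (X '' ((G.neighborSet v) \ S))

/-- The edge ideal of the induced subgraph of `G` on the complement of the
closed neighborhood of the vertex set `S`, i.e. `I(G \ N_G[S])`. -/
noncomputable def outsideNbhdEdgeIdeal (k : Type) [Field k] {n : ℕ} (G : SimpleGraph (Fin n))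
    (S : Set (Fin n)) : Ideal (MvPolynomial (Fin n) k) :=
  inducedEdgeIdeal k G (closedNbhdSet G S)ᶜ

/-- The distance witness set `W(u,v)` of two vertices at distance `d ≥ 2`:
vertices `w` with `dist(u,w) = d-1` and `dist(w,v) = 1`. -/
def distWitness {V : Type*} (G : SimpleGraph V) (d : ℕ) (u v : V) : Set V :=
  {w | G.edist u w = ((d - 1 : ℕ) : ℕ∞) ∧ G.edist w v = 1}

/-!
In `P_n^d` two vertices are adjacent exactly when they are distinct and at most `d` apart.
If `a < b` and `a' < b'` are edges of an induced matching with `a < a'`, then `a'` lies more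
than `d` beyond `b`, since otherwise `a'` or `b` would be adjacent to a vertex it is not matched
to. Hence the smaller endpoints of the edges are at least `d + 2` apart and at most `n - 2`, so
their quotients by `d + 2` are distinct and smaller than `⌊(n + d)/(d + 2)⌋`. Conversely, the
edges `{i(d + 2), i(d + 2) + 1}` for `i < ⌊(n + d)/(d + 2)⌋` form an induced matching.
-/
lemma Set.ncard_le_div_of_forall_add_le {S : Set ℕ} {k N : ℕ} (hk : 0 < k)
    (hN : ∀ s ∈ S, s + k ≤ N) (hsep : ∀ s ∈ S, ∀ t ∈ S, s < t → s + k ≤ t) :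
    S.ncard ≤ N / k := by
  have div_lt_div : ∀ s t, s + k ≤ t → s / k < t / k := fun s t h =>
    calc s / k < (s + k) / k := by rw [Nat.add_div_right s hk]; omega
      _ ≤ t / k := Nat.div_le_div_right h
  calc S.ncard ≤ (Set.Iio (N / k)).ncard := by
        refine Set.ncard_le_ncard_of_injOn (· / k) (fun s hs => div_lt_div s N (hN s hs)) ?_
          (Set.finite_Iio _)
        intro s hs t ht hst
        by_contra hne
        rcases Nat.lt_or_gt_of_ne hne with h | h
        · exact (div_lt_div s t (hsep s hs t ht h)).ne hst
        · exact (div_lt_div t s (hsep t ht s hs h)).ne' hst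
    _ = N / k := Set.ncard_Iio_nat _

lemma Sym2.mk_inf_sup {α : Type*} [LinearOrder α] (e : Sym2 α) : s(e.inf, e.sup) = e :=
  Sym2.sortEquiv.symm_apply_apply e

namespace SimpleGraph

variable {V : Type*} {G : SimpleGraph V}

lemma power_adj {d : ℕ} {u v : V} :
    (G.power d).Adj u v ↔ u ≠ v ∧ G.edist u v ≤ d :=
  Iff.rfl

namespace Subgraph

variable {M : G.Subgraph}

lemma adj_inf_sup [LinearOrder V] {e : Sym2 V} (he : e ∈ M.edgeSet) :
    M.Adj e.inf e.sup ∧ e.inf < e.sup := by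
  rw [← Sym2.mk_inf_sup e, Subgraph.mem_edgeSet] at he
  exact ⟨he, (Sym2.inf_le_sup e).lt_of_ne he.ne⟩

lemma IsMatching.eq_of_adj_of_isInduced (hM : M.IsMatching) (hi : M.IsInduced) {u v w : V}
    (huv : M.Adj u v) (hw : w ∈ M.verts) (huw : G.Adj u w) : w = v :=
  hM.eq_of_adj_left (hi huv.fst_mem hw huw) huv

end Subgraph

lemma exists_isMatching_isInduced_edgeSet_eq_range {ι : Type*} (e : ι → Sym2 V)
    (he : ∀ i, e i ∈ G.edgeSet)
    (hsep : Pairwise fun i j => ∀ x ∈ e i, ∀ y ∈ e j, x ≠ y ∧ ¬G.Adj x y) :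
    ∃ M : G.Subgraph, M.IsMatching ∧ M.IsInduced ∧ M.edgeSet = Set.range e := by
  have same_edge {i j : ι} {x y : V} (hx : x ∈ e i) (hy : y ∈ e j) (h : x = y ∨ G.Adj x y) :
      i = j := by
    by_contra hij
    have := hsep hij x hx y hy
    tauto
  let M := (⊤ : G.Subgraph).induce {x | ∃ i, x ∈ e i}
  have hadj {x y : V} : M.Adj x y ↔ ∃ i, e i = s(x, y) := by
    constructor
    · rintro ⟨⟨i, hx⟩, ⟨j, hy⟩, hxy⟩
      obtain rfl := same_edge hx hy (Or.inr hxy)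
      exact ⟨i, (Sym2.mem_and_mem_iff hxy.ne).mp ⟨hx, hy⟩⟩
    · rintro ⟨i, hi⟩
      have hxy : G.Adj x y := by rw [← mem_edgeSet, ← hi]; exact he i
      exact ⟨⟨i, hi ▸ Sym2.mem_mk_left x y⟩, ⟨i, hi ▸ Sym2.mem_mk_right x y⟩, hxy⟩
  refine ⟨M, ?_, (Subgraph.isInduced_iff_exists_eq_induce_top M).mpr ⟨_, rfl⟩, ?_⟩
  · rintro x ⟨i, hx⟩
    obtain ⟨w, hw⟩ := Sym2.mem_iff_exists.mp hx
    refine ⟨w, hadj.mpr ⟨i, hw⟩, fun y hy => ?_⟩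
    obtain ⟨j, hj⟩ := hadj.mp hy
    obtain rfl := same_edge hx (hj ▸ Sym2.mem_mk_left x y) (Or.inl rfl)
    exact Sym2.congr_right.mp (hj.symm.trans hw)
  · ext f
    induction f with
    | h x y => simpa [eq_comm] using hadj

lemma exists_isMatching_isInduced_ncard_edgeSet_eq {ι : Type*} (e : ι → Sym2 V)
    (he : ∀ i, e i ∈ G.edgeSet)
    (hsep : Pairwise fun i j => ∀ x ∈ e i, ∀ y ∈ e j, x ≠ y ∧ ¬G.Adj x y) :
    ∃ M : G.Subgraph, M.IsMatching ∧ M.IsInduced ∧ M.edgeSet.ncard = Nat.card ι := by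
  obtain ⟨M, hM, hi, hedges⟩ := exists_isMatching_isInduced_edgeSet_eq_range e he hsep
  refine ⟨M, hM, hi, hedges ▸ Set.ncard_range_of_injective fun i j hij => ?_⟩
  by_contra hne
  have hx := (e i).out_fst_mem
  exact (hsep hne _ hx _ (hij ▸ hx)).1 rfl

end SimpleGraph

lemma indMatchNum_eq_of_forall_le_of_exists {V : Type*} {G : SimpleGraph V} {m : ℕ}
    (hle : ∀ M : G.Subgraph, M.IsMatching → M.IsInduced → M.edgeSet.ncard ≤ m)
    (hex : ∃ M : G.Subgraph, M.IsMatching ∧ M.IsInduced ∧ M.edgeSet.ncard = m) :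
    indMatchNum G = m :=
  IsGreatest.csSup_eq ⟨hex, by rintro _ ⟨M, hM, hi, rfl⟩; exact hle M hM hi⟩

namespace SimpleGraph

variable {n d : ℕ}

lemma pathGraph_edist_le (u v : Fin n) : (pathGraph n).edist u v ≤ Nat.dist u v := by
  suffices h : ∀ k : ℕ, ∀ u v : Fin n, (v : ℕ) = u + k → (pathGraph n).edist u v ≤ k by
    rcases le_total (u : ℕ) v with huv | hvu
    · rw [Nat.dist_eq_sub_of_le huv]
      exact h _ u v (by omega)
    · rw [edist_comm, Nat.dist_eq_sub_of_le_right hvu]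
      exact h _ v u (by omega)
  intro k
  induction k with
  | zero =>
    intro u v h
    simp [show u = v from Fin.ext (by omega)]
  | succ k ih =>
    intro u v h
    let w : Fin n := ⟨u + k, by omega⟩
    have hwv : (pathGraph n).Adj w v := pathGraph_adj.mpr (Or.inl (by simp [w]; omega))
    calc (pathGraph n).edist u v ≤ (pathGraph n).edist u w + (pathGraph n).edist w v :=
          SimpleGraph.edist_triangle
      _ ≤ k + 1 := by
          gcongr
          · exact ih u w rfl
          · exact (edist_eq_one_iff_adj.mpr hwv).le
      _ = (k + 1 : ℕ) := by push_cast; rfl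

lemma pathGraph_dist_le_length {u v : Fin n} (p : (pathGraph n).Walk u v) :
    Nat.dist u v ≤ p.length := by
  induction p with
  | nil => simp
  | cons h p ih =>
    rw [pathGraph_adj] at h
    simp only [Nat.dist, Walk.length_cons] at ih ⊢
    omega

lemma pathGraph_edist (u v : Fin n) : (pathGraph n).edist u v = Nat.dist u v := by
  refine (pathGraph_edist_le u v).antisymm ?_
  obtain ⟨p, hp⟩ := (pathGraph_preconnected n u v).exists_walk_length_eq_edist
  rw [← hp]
  exact_mod_cast pathGraph_dist_le_length p

lemma pathGraph_power_adj {u v : Fin n} :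
    ((pathGraph n).power d).Adj u v ↔ u ≠ v ∧ (u : ℕ) ≤ v + d ∧ (v : ℕ) ≤ u + d := by
  rw [power_adj, pathGraph_edist, Nat.cast_le, Nat.dist]
  omega

section InducedMatching

variable {M : ((pathGraph n).power d).Subgraph}

lemma pathGraph_power_add_lt_of_isMatching_of_isInduced (hM : M.IsMatching) (hi : M.IsInduced)
    {a b a' b' : Fin n} (hab : M.Adj a b) (ha'b' : M.Adj a' b') (hlt : a < b) (hlt' : a' < b')
    (haa' : a < a') : (b : ℕ) + d < a' := by
  have hbd : (b : ℕ) ≤ a + d := (pathGraph_power_adj.mp hab.adj_sub).2.2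
  rw [Fin.lt_def] at hlt hlt' haa'
  by_contra! hfar
  by_cases hnear : (a' : ℕ) ≤ a + d
  · -- `a` would be matched to `a'`, hence `b = a'` is matched to both `a` and `b'`
    have ha' : a' = b := hM.eq_of_adj_of_isInduced hi hab ha'b'.fst_mem
      (pathGraph_power_adj.mpr ⟨fun h => by simp [h] at haa', by omega, by omega⟩)
    have : b' = a := hM.eq_of_adj_left (ha' ▸ ha'b') hab.symm
    rw [this, ha'] at hlt'
    omega
  · have : a' = a := hM.eq_of_adj_of_isInduced hi hab.symm ha'b'.fst_mem
      (pathGraph_power_adj.mpr ⟨fun h => by simp [← h] at hnear; omega, by omega, by omega⟩)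
    rw [this] at haa'
    omega

lemma pathGraph_power_ncard_edgeSet_le (hM : M.IsMatching) (hi : M.IsInduced) :
    M.edgeSet.ncard ≤ (n + d) / (d + 2) := by
  have hinj : Set.InjOn (fun e : Sym2 (Fin n) => (e.inf : ℕ)) M.edgeSet := by
    intro e he e' he' h
    have hinf : e.inf = e'.inf := Fin.ext h
    have hsup : e.sup = e'.sup :=
      hM.eq_of_adj_left (Subgraph.adj_inf_sup he).1 (hinf ▸ (Subgraph.adj_inf_sup he').1)
    exact Sym2.inf_eq_inf_and_sup_eq_sup.mp ⟨hinf, hsup⟩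
  rw [← hinj.ncard_image]
  refine Set.ncard_le_div_of_forall_add_le (by omega) ?_ ?_
  · rintro _ ⟨e, he, rfl⟩
    have := (Subgraph.adj_inf_sup he).2
    have := e.sup.isLt
    simp only [Fin.lt_def] at *
    omega
  · rintro _ ⟨e, he, rfl⟩ _ ⟨e', he', rfl⟩ hlt
    dsimp only at hlt ⊢
    obtain ⟨hadj, hlt₁⟩ := Subgraph.adj_inf_sup he
    obtain ⟨hadj', hlt₂⟩ := Subgraph.adj_inf_sup he'
    have := pathGraph_power_add_lt_of_isMatching_of_isInduced hM hi hadj hadj' hlt₁ hlt₂ hlt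
    rw [Fin.lt_def] at hlt₁
    omega

end InducedMatching

lemma pathGraph_power_exists_isMatching_isInduced (hd : 1 ≤ d) :
    ∃ M : ((pathGraph n).power d).Subgraph,
      M.IsMatching ∧ M.IsInduced ∧ M.edgeSet.ncard = (n + d) / (d + 2) := by
  set m := (n + d) / (d + 2)
  have block_le {i j : ℕ} (h : i < j) : i * (d + 2) + (d + 2) ≤ j * (d + 2) := by
    simpa [add_one_mul] using Nat.mul_le_mul_right (d + 2) (Nat.succ_le_of_lt h)
  have fits (i : Fin m) : i * (d + 2) + 1 < n := by
    have := block_le i.isLt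
    have : m * (d + 2) ≤ n + d := Nat.div_mul_le_self _ _
    omega
  let e (i : Fin m) : Sym2 (Fin n) :=
    s(⟨i * (d + 2), by have := fits i; omega⟩, ⟨i * (d + 2) + 1, fits i⟩)
  have he (i : Fin m) : e i ∈ ((pathGraph n).power d).edgeSet := by
    rw [mem_edgeSet, pathGraph_power_adj]
    exact ⟨fun h => by simpa using congrArg Fin.val h, by dsimp only; omega, by dsimp only; omega⟩
  have hsep : Pairwise fun i j => ∀ x ∈ e i, ∀ y ∈ e j,
      x ≠ y ∧ ¬((pathGraph n).power d).Adj x y := by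
    intro i j hij x hx y hy
    simp only [e, Sym2.mem_iff, Fin.ext_iff] at hx hy
    rw [pathGraph_power_adj, Ne, Fin.ext_iff]
    rcases Nat.lt_or_gt_of_ne (Fin.val_ne_of_ne hij) with h | h <;>
    · have := block_le h
      omega
  simpa using exists_isMatching_isInduced_ncard_edgeSet_eq e he hsep

end SimpleGraph

theorem indMatchNum_power_path_general (n d : ℕ) (hd : 1 ≤ d) :
    indMatchNum ((SimpleGraph.pathGraph n).power d) = (n + d) / (d + 2) :=
  indMatchNum_eq_of_forall_le_of_exists
    (fun _ hM hi => SimpleGraph.pathGraph_power_ncard_edgeSet_le hM hi)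
    (SimpleGraph.pathGraph_power_exists_isMatching_isInduced hd)

/-- `im(P_n^d) = ⌊(n+d)/(d+2)⌋`. -/
theorem indMatchNum_power_path (n d : ℕ) (hn : 2 ≤ n) (hd : 1 ≤ d) :
    indMatchNum ((SimpleGraph.pathGraph n).power d) = (n + d) / (d + 2) :=
  indMatchNum_power_path_general n d hd
end

section
/- Let G be a simple graph, d ≥ 2, and suppose {u_1,v_1} and {u_2,v_2} form an induced matching of size 2 in G^d with dist_G(u_1,v_1) = d and dist_G(u_2,v_2) = d. Then W[u_1,v_1] ∩ W[u_2,v_2] = ∅, where for vertices u,v at distance d, W[u,v] = W(u,v) ∪ {u,v} and W(u,v) is the set of vertices w with dist_G(u,w) = d-1 and dist_G(w,v) = 1. -/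
open MvPolynomial

/-! A vertex common to `W[u₁,v₁]` and `W[u₂,v₂]` is, on each side, either the `u` or within
distance one of the `v`; in each of the four cases some cross pair of matching vertices is
at distance at most `2 ≤ d` in `G`, i.e. adjacent in `G^d`. -/

namespace SimpleGraph

variable {V : Type*} {G : SimpleGraph V}

theorem eq_or_edist_le_one_of_mem_distWitness_union {d : ℕ} {u v x : V}
    (hx : x ∈ distWitness G d u v ∪ {u, v}) : x = u ∨ G.edist x v ≤ 1 := by
  rcases hx with ⟨-, hxv⟩ | rfl | rfl
  · exact .inr hxv.le
  · exact .inl rfl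
  · exact .inr (by simp)

theorem edist_le_two_of_edist_le_one {u v x : V} (hu : G.edist x u ≤ 1) (hv : G.edist x v ≤ 1) :
    G.edist u v ≤ 2 :=
  calc G.edist u v ≤ G.edist u x + G.edist x v := G.edist_triangle
    _ ≤ 1 + 1 := by rw [edist_comm]; exact add_le_add hu hv
    _ = 2 := one_add_one_eq_two

end SimpleGraph

theorem distWitness_disjoint_of_dist_eq_general {V : Type*} (G : SimpleGraph V) (d : ℕ) (hd : 2 ≤ d)
    (u₁ v₁ u₂ v₂ : V)
    (huu : u₁ ≠ u₂) (huv : u₁ ≠ v₂) (hvu : v₁ ≠ u₂) (hvv : v₁ ≠ v₂)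
    (nuv : ¬ (G.power d).Adj u₁ v₂)
    (nvu : ¬ (G.power d).Adj v₁ u₂) (nvv : ¬ (G.power d).Adj v₁ v₂) :
    (distWitness G d u₁ v₁ ∪ {u₁, v₁}) ∩ (distWitness G d u₂ v₂ ∪ {u₂, v₂}) = ∅ := by
  have h2d : (2 : ℕ∞) ≤ d := by exact_mod_cast hd
  have h1d : (1 : ℕ∞) ≤ d := one_le_two.trans h2d
  refine Set.eq_empty_of_forall_notMem fun x ⟨hx₁, hx₂⟩ => ?_
  rcases G.eq_or_edist_le_one_of_mem_distWitness_union hx₁ with rfl | hxv₁ <;>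
    rcases G.eq_or_edist_le_one_of_mem_distWitness_union hx₂ with rfl | hxv₂
  · exact huu rfl
  · exact nuv ⟨huv, hxv₂.trans h1d⟩
  · exact nvu ⟨hvu, (G.edist_comm ▸ hxv₁).trans h1d⟩
  · exact nvv ⟨hvv, (G.edist_le_two_of_edist_le_one hxv₁ hxv₂).trans h2d⟩

/-- if `{u₁,v₁}`, `{u₂,v₂}` is an induced matching of `G^d` with
`dist_G(u₁,v₁) = dist_G(u₂,v₂) = d`, then `W[u₁,v₁] ∩ W[u₂,v₂] = ∅`. -/
theorem distWitness_disjoint_of_dist_eq {V : Type*} (G : SimpleGraph V) (d : ℕ) (hd : 2 ≤ d)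
    (u₁ v₁ u₂ v₂ : V)
    (h₁ : (G.power d).Adj u₁ v₁) (h₂ : (G.power d).Adj u₂ v₂)
    (huu : u₁ ≠ u₂) (huv : u₁ ≠ v₂) (hvu : v₁ ≠ u₂) (hvv : v₁ ≠ v₂)
    (nuu : ¬ (G.power d).Adj u₁ u₂) (nuv : ¬ (G.power d).Adj u₁ v₂)
    (nvu : ¬ (G.power d).Adj v₁ u₂) (nvv : ¬ (G.power d).Adj v₁ v₂)
    (hd₁ : G.edist u₁ v₁ = (d : ℕ∞))
    (hd₂ : G.edist u₂ v₂ = (d : ℕ∞)) :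
    (distWitness G d u₁ v₁ ∪ {u₁, v₁}) ∩ (distWitness G d u₂ v₂ ∪ {u₂, v₂}) = ∅ :=
  distWitness_disjoint_of_dist_eq_general G d hd u₁ v₁ u₂ v₂ huu huv hvu hvv nuv nvu nvv
end

section
/- Let n ≥ 2d+2 and G = C_n^d, with I = I(G), J = I(G \ {1}), and K = (x_{n-d+1},...,x_n, x_2,...,x_{d+1}). Then I = J + x_1·K and J ∩ K = L + x_2·M, where L = Σ_{j=3}^{d+1} x_j(A_j + B_j) + Σ_{j=n-d+1}^{n} x_j(A_j + B_j) and M = A_2 + B_2. -/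
/-!
Every edge of `G` either avoids the vertex `1` or joins it to a vertex of `N_G(1)`, and in
`C_n^d` one has `N_G(1) = {n-d+1, …, n, 2, …, d+1}`; this gives `I = J + x_1 K`.

The second identity holds for any graph and any neighbour `2` of `1`. Both sides are monomial
ideals, and a monomial lies in `J ∩ K` iff it is divisible by an edge `x_a x_b` with `a, b ≠ 1`
and by some `x_j` with `j ∈ N_G(1)`. If `a` or `b` lies in `N_G(1)`, then `x_a x_b` is already a
generator of `L + x_2 M`. Otherwise `j ∉ {a, b}`; if `j` is adjacent to `a` (or `b`), then
`x_j x_a ∈ x_j A_j`, and if not, `a, b ∉ N_G[{1, j}]`, so `x_j x_a x_b ∈ x_j B_j`.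
-/

open MvPolynomial

namespace MvPolynomial

variable {σ R : Type*} [CommSemiring R]

theorem mem_of_forall_monomial_one_mem {I : Ideal (MvPolynomial σ R)} {p : MvPolynomial σ R}
    (h : ∀ m ∈ p.support, monomial m 1 ∈ I) : p ∈ I := by
  rw [p.as_sum]
  refine I.sum_mem fun m hm => ?_
  rw [← mul_one (coeff m p), ← C_mul_monomial]
  exact I.mul_mem_left _ (h m hm)

theorem prod_X_dvd_monomial {s : Finset σ} {m : σ →₀ ℕ} (h : ∀ i ∈ s, m i ≠ 0) :
    (∏ i ∈ s, X i : MvPolynomial σ R) ∣ monomial m 1 := by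
  classical
  simp_rw [X, ← monomial_sum_one, monomial_dvd_monomial, one_dvd, and_true]
  refine Or.inr fun x => ?_
  simp_rw [Finsupp.finsetSum_apply, Finsupp.single_apply, Finset.sum_ite_eq']
  split_ifs with hx
  · exact Nat.one_le_iff_ne_zero.2 (h x hx)
  · exact Nat.zero_le _

theorem X_mul_X_dvd_monomial {a b : σ} {m : σ →₀ ℕ} (hab : a ≠ b) (ha : m a ≠ 0) (hb : m b ≠ 0) :
    (X a * X b : MvPolynomial σ R) ∣ monomial m 1 := by
  classical
  simpa [Finset.prod_pair hab] using prod_X_dvd_monomial (R := R) (s := {a, b}) (by simp [ha, hb])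

theorem X_mul_X_mul_X_dvd_monomial {a b c : σ} {m : σ →₀ ℕ} (hab : a ≠ b) (hac : a ≠ c)
    (hbc : b ≠ c) (ha : m a ≠ 0) (hb : m b ≠ 0) (hc : m c ≠ 0) :
    (X a * (X b * X c) : MvPolynomial σ R) ∣ monomial m 1 := by
  classical
  simpa [Finset.prod_insert, Finset.prod_pair hbc, hab, hac] using
    prod_X_dvd_monomial (R := R) (s := {a, b, c}) (by simp [ha, hb, hc])

theorem X_mul_X_eq_monomial (a b : σ) :
    (X a * X b : MvPolynomial σ R) = monomial (Finsupp.single a 1 + Finsupp.single b 1) 1 := by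
  rw [X, X, monomial_mul, one_mul]

end MvPolynomial

theorem Finsupp.single_add_single_le_iff {σ : Type*} {a b : σ} (hab : a ≠ b) {m : σ →₀ ℕ} :
    Finsupp.single a 1 + Finsupp.single b 1 ≤ m ↔ m a ≠ 0 ∧ m b ≠ 0 := by
  classical
  simp only [Finsupp.le_def, Finsupp.coe_add, Pi.add_apply, Finsupp.single_apply]
  refine ⟨fun h => ⟨?_, ?_⟩, fun ⟨ha, hb⟩ x => ?_⟩
  · have := h a; grind
  · have := h b; grind
  · split_ifs <;> grind

theorem Ideal.span_singleton_mul_span_le {R : Type*} [CommSemiring R] {x : R} {s : Set R}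
    {I : Ideal R} (h : ∀ y ∈ s, x * y ∈ I) : Ideal.span {x} * Ideal.span s ≤ I := by
  rw [Ideal.span_mul_span', Set.singleton_mul, Ideal.span_le, Set.image_subset_iff]
  exact h

section EdgeIdeal

variable {k : Type} [Field k] {n : ℕ} (G : SimpleGraph (Fin n))

theorem X_mul_X_mem_inducedEdgeIdeal {S : Set (Fin n)} {a b : Fin n} (hab : G.Adj a b)
    (ha : a ∈ S) (hb : b ∈ S) : X a * X b ∈ inducedEdgeIdeal k G S :=
  Ideal.subset_span ⟨a, b, hab, ha, hb, rfl⟩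

theorem inducedEdgeIdeal_mono {S T : Set (Fin n)} (h : S ⊆ T) :
    inducedEdgeIdeal k G S ≤ inducedEdgeIdeal k G T :=
  Ideal.span_mono fun _ ⟨a, b, hab, ha, hb, e⟩ => ⟨a, b, hab, h ha, h hb, e⟩

theorem mem_inducedEdgeIdeal_iff {S : Set (Fin n)} {p : MvPolynomial (Fin n) k} :
    p ∈ inducedEdgeIdeal k G S ↔
      ∀ m ∈ p.support, ∃ a b, G.Adj a b ∧ a ∈ S ∧ b ∈ S ∧ m a ≠ 0 ∧ m b ≠ 0 := by
  have hgen : {m | ∃ a b, G.Adj a b ∧ a ∈ S ∧ b ∈ S ∧ m = (X a * X b : MvPolynomial (Fin n) k)} =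
      (fun s => monomial s 1) '' {s | ∃ a b, G.Adj a b ∧ a ∈ S ∧ b ∈ S ∧
        s = Finsupp.single a 1 + Finsupp.single b 1} := by
    ext
    simp only [X_mul_X_eq_monomial, Set.mem_image]
    constructor
    · rintro ⟨a, b, hab, ha, hb, rfl⟩
      exact ⟨_, ⟨a, b, hab, ha, hb, rfl⟩, rfl⟩
    · rintro ⟨_, ⟨a, b, hab, ha, hb, rfl⟩, rfl⟩
      exact ⟨a, b, hab, ha, hb, rfl⟩
  rw [inducedEdgeIdeal, hgen, mem_ideal_span_monomial_image]
  refine forall₂_congr fun m _ => ⟨?_, ?_⟩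
  · rintro ⟨_, ⟨a, b, hab, ha, hb, rfl⟩, hle⟩
    exact ⟨a, b, hab, ha, hb, (Finsupp.single_add_single_le_iff hab.ne).1 hle⟩
  · rintro ⟨a, b, hab, ha, hb, hm⟩
    exact ⟨_, ⟨a, b, hab, ha, hb, rfl⟩, (Finsupp.single_add_single_le_iff hab.ne).2 hm⟩

theorem edgeIdeal_eq_add_span_X_mul_span_neighborSet (v₀ : Fin n) :
    edgeIdeal k G = inducedEdgeIdeal k G {v | v ≠ v₀} +
      Ideal.span {X v₀} * Ideal.span (X '' G.neighborSet v₀) := by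
  rw [Ideal.add_eq_sup]
  refine le_antisymm (Ideal.span_le.2 ?_) (sup_le (inducedEdgeIdeal_mono G (Set.subset_univ _)) ?_)
  · rintro _ ⟨a, b, hab, -, -, rfl⟩
    by_cases ha : a = v₀
    · subst ha
      exact Ideal.mem_sup_right (Ideal.mul_mem_mul (Ideal.mem_span_singleton_self _)
        (Ideal.subset_span ⟨b, hab, rfl⟩))
    by_cases hb : b = v₀
    · subst hb
      rw [mul_comm (X a)]
      exact Ideal.mem_sup_right (Ideal.mul_mem_mul (Ideal.mem_span_singleton_self _)
        (Ideal.subset_span ⟨a, hab.symm, rfl⟩))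
    exact Ideal.mem_sup_left (X_mul_X_mem_inducedEdgeIdeal G hab ha hb)
  · refine Ideal.span_singleton_mul_span_le ?_
    rintro _ ⟨x, hx, rfl⟩
    exact X_mul_X_mem_inducedEdgeIdeal G hx trivial trivial

end EdgeIdeal

/-- The summand `x_j (A_j + B_j)` of `L` (with `S = {v₀, v₁}`), and `x_2 M` (with `j = v₁`,
`S = {v₀}`). -/
noncomputable def linkTerm (k : Type) [Field k] {n : ℕ} (G : SimpleGraph (Fin n))
    (v₀ j : Fin n) (S : Set (Fin n)) : Ideal (MvPolynomial (Fin n) k) :=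
  Ideal.span {X j} * (nbrIdeal k G j S + outsideNbhdEdgeIdeal k G {v₀, j})

/-- `L + x_2 M`, with the two index ranges of `L` merged into `N_G(1) \ {2}`. -/
noncomputable def linkIdeal (k : Type) [Field k] {n : ℕ} (G : SimpleGraph (Fin n))
    [DecidableRel G.Adj] (v₀ v₁ : Fin n) : Ideal (MvPolynomial (Fin n) k) :=
  (∑ j ∈ (G.neighborFinset v₀).erase v₁, linkTerm k G v₀ j {v₀, v₁}) + linkTerm k G v₀ v₁ {v₀}

section LinkIdeal

variable {k : Type} [Field k] {n : ℕ} (G : SimpleGraph (Fin n)) {v₀ v₁ : Fin n}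

theorem nbrIdeal_anti {j : Fin n} {S T : Set (Fin n)} (h : S ⊆ T) :
    nbrIdeal k G j T ≤ nbrIdeal k G j S :=
  Ideal.span_mono (Set.image_mono (Set.sdiff_subset_sdiff_right h))

theorem notMem_closedNbhdSet_pair {u w x : Fin n} (hu : x ≠ u) (hw : x ≠ w)
    (hux : ¬G.Adj u x) (hwx : ¬G.Adj w x) : x ∉ closedNbhdSet G {u, w} := by
  rintro ((rfl | rfl) | ⟨v, rfl | rfl, hvx⟩) <;> contradiction

theorem linkTerm_le_inf {j : Fin n} {S : Set (Fin n)} (hj : G.Adj v₀ j) (hS : v₀ ∈ S) :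
    linkTerm k G v₀ j S ≤
      inducedEdgeIdeal k G {v | v ≠ v₀} ⊓ Ideal.span (X '' G.neighborSet v₀) := by
  rw [linkTerm]
  refine le_inf ?_ (Ideal.mul_le_left.trans (Ideal.span_mono ?_))
  · rw [Ideal.add_eq_sup, Ideal.mul_sup]
    refine sup_le (Ideal.span_singleton_mul_span_le ?_)
      (Ideal.mul_le_right.trans (inducedEdgeIdeal_mono G ?_))
    · rintro _ ⟨ℓ, ⟨hjℓ, hℓS⟩, rfl⟩
      exact X_mul_X_mem_inducedEdgeIdeal G hjℓ hj.ne' fun h => hℓS (h ▸ hS)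
    · rintro v hv rfl
      exact hv (Or.inl (Or.inl rfl))
  · exact Set.singleton_subset_iff.2 ⟨j, hj, rfl⟩

variable [DecidableRel G.Adj]

theorem linkTerm_le_linkIdeal {c : Fin n} (hc : G.Adj v₀ c) :
    linkTerm k G v₀ c {v₀, v₁} ≤ linkIdeal k G v₀ v₁ := by
  rw [linkIdeal, Ideal.add_eq_sup]
  by_cases hc₁ : c = v₁
  · subst hc₁
    refine le_sup_of_le_right ?_
    rw [linkTerm, linkTerm]
    exact Ideal.mul_mono_right
      (add_le_add_left (nbrIdeal_anti G (Set.singleton_subset_iff.2 (Set.mem_insert _ _))) _)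
  · rw [Ideal.sum_eq_sup]
    exact le_sup_of_le_left (Finset.le_sup (f := fun j => linkTerm k G v₀ j {v₀, v₁})
      (Finset.mem_erase.2 ⟨hc₁, (G.mem_neighborFinset _ _).2 hc⟩))

theorem X_mul_X_mem_linkIdeal {c c' : Fin n} (hc : G.Adj v₀ c) (hcc' : G.Adj c c')
    (hc' : c' ≠ v₀) : X c * X c' ∈ linkIdeal k G v₀ v₁ := by
  by_cases hc'₁ : c' = v₁
  · subst hc'₁
    rw [mul_comm, linkIdeal, Ideal.add_eq_sup]
    exact Ideal.mem_sup_right (Ideal.mul_mem_mul (Ideal.mem_span_singleton_self _)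
      (Ideal.mem_sup_left (Ideal.subset_span ⟨c, ⟨hcc'.symm, hc.ne'⟩, rfl⟩)))
  · refine linkTerm_le_linkIdeal G hc (Ideal.mul_mem_mul (Ideal.mem_span_singleton_self _)
      (Ideal.mem_sup_left (Ideal.subset_span ⟨c', ⟨hcc', ?_⟩, rfl⟩)))
    rintro (h | h) <;> contradiction

theorem X_mul_X_mul_X_mem_linkIdeal {c a b : Fin n} (hc : G.Adj v₀ c) (hab : G.Adj a b)
    (ha : a ∉ closedNbhdSet G {v₀, c}) (hb : b ∉ closedNbhdSet G {v₀, c}) :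
    X c * (X a * X b) ∈ linkIdeal k G v₀ v₁ :=
  linkTerm_le_linkIdeal G hc (Ideal.mul_mem_mul (Ideal.mem_span_singleton_self _)
    (Ideal.mem_sup_right (X_mul_X_mem_inducedEdgeIdeal G hab ha hb)))

theorem monomial_one_mem_linkIdeal {m : Fin n →₀ ℕ} {a b j : Fin n} (hab : G.Adj a b)
    (ha : a ≠ v₀) (hb : b ≠ v₀) (hma : m a ≠ 0) (hmb : m b ≠ 0) (hj : G.Adj v₀ j)
    (hmj : m j ≠ 0) : monomial m (1 : k) ∈ linkIdeal k G v₀ v₁ := by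
  by_cases haN : G.Adj v₀ a
  · exact Ideal.mem_of_dvd _ (X_mul_X_dvd_monomial hab.ne hma hmb)
      (X_mul_X_mem_linkIdeal G haN hab hb)
  by_cases hbN : G.Adj v₀ b
  · exact Ideal.mem_of_dvd _ (X_mul_X_dvd_monomial hab.ne' hmb hma)
      (X_mul_X_mem_linkIdeal G hbN hab.symm ha)
  have hja : j ≠ a := fun h => haN (h ▸ hj)
  have hjb : j ≠ b := fun h => hbN (h ▸ hj)
  by_cases hja' : G.Adj j a
  · exact Ideal.mem_of_dvd _ (X_mul_X_dvd_monomial hja hmj hma)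
      (X_mul_X_mem_linkIdeal G hj hja' ha)
  by_cases hjb' : G.Adj j b
  · exact Ideal.mem_of_dvd _ (X_mul_X_dvd_monomial hjb hmj hmb)
      (X_mul_X_mem_linkIdeal G hj hjb' hb)
  exact Ideal.mem_of_dvd _ (X_mul_X_mul_X_dvd_monomial hja hjb hab.ne hmj hma hmb)
    (X_mul_X_mul_X_mem_linkIdeal G hj hab
      (notMem_closedNbhdSet_pair G ha hja.symm haN hja')
      (notMem_closedNbhdSet_pair G hb hjb.symm hbN hjb'))

theorem inducedEdgeIdeal_inf_span_neighborSet (h₀₁ : G.Adj v₀ v₁) :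
    inducedEdgeIdeal k G {v | v ≠ v₀} ⊓ Ideal.span (X '' G.neighborSet v₀) =
      linkIdeal k G v₀ v₁ := by
  apply le_antisymm
  · rintro p ⟨hpJ, hpK⟩
    rw [SetLike.mem_coe, mem_inducedEdgeIdeal_iff] at hpJ
    rw [SetLike.mem_coe, mem_ideal_span_X_image] at hpK
    refine mem_of_forall_monomial_one_mem fun m hm => ?_
    obtain ⟨a, b, hab, ha, hb, hma, hmb⟩ := hpJ m hm
    obtain ⟨j, hj, hmj⟩ := hpK m hm
    exact monomial_one_mem_linkIdeal G hab ha hb hma hmb hj hmj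
  · rw [linkIdeal, Ideal.add_eq_sup, Ideal.sum_eq_sup]
    refine sup_le (Finset.sup_le fun j hj => ?_) (linkTerm_le_inf G h₀₁ rfl)
    exact linkTerm_le_inf G ((G.mem_neighborFinset _ _).1 (Finset.mem_of_mem_erase hj))
      (Set.mem_insert _ _)

end LinkIdeal

theorem Fin.val_sub_cases {n : ℕ} (x y : Fin n) :
    ((y : ℕ) ≤ x ∧ ((x - y : Fin n) : ℕ) = x - y) ∨
      ((x : ℕ) < y ∧ ((x - y : Fin n) : ℕ) = n + x - y) :=
  (le_or_gt y x).imp (fun h => ⟨h, Fin.sub_val_of_le h⟩) (fun h => ⟨h, Fin.coe_sub_iff_lt.2 h⟩)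

namespace SimpleGraph

theorem cycleGraph_edist_le_val_sub {n : ℕ} (u v : Fin n) :
    (cycleGraph n).edist u v ≤ ((v - u : Fin n) : ℕ) := by
  induction h : ((v - u : Fin n) : ℕ) generalizing v with
  | zero =>
    have huv : u = v := Fin.ext (by rcases Fin.val_sub_cases v u with ⟨_, _⟩ | ⟨_, _⟩ <;> omega)
    simp [huv]
  | succ k ih =>
    obtain ⟨m, rfl⟩ : ∃ m, n = m + 2 := ⟨n - 2, by have := (v - u).isLt; omega⟩
    have hadj : (cycleGraph (m + 2)).Adj (v - 1) v := by simp [cycleGraph_adj]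
    have hk : ((v - 1 - u : Fin (m + 2)) : ℕ) = k := by
      rw [sub_right_comm]
      rcases Fin.val_sub_cases (v - u) 1 with ⟨_, h'⟩ | ⟨_, h'⟩ <;> simp only [Fin.val_one] at * <;> omega
    calc (cycleGraph (m + 2)).edist u v
        ≤ (cycleGraph (m + 2)).edist u (v - 1) + (cycleGraph (m + 2)).edist (v - 1) v :=
          SimpleGraph.edist_triangle
      _ ≤ k + 1 := add_le_add (ih _ hk) (edist_eq_one_iff_adj.2 hadj).le
      _ = ((k + 1 : ℕ) : ℕ∞) := by push_cast; rfl

theorem cycleGraph_walk_length_ge {n : ℕ} {u v : Fin n} (p : (cycleGraph n).Walk u v) :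
    ((v - u : Fin n) : ℕ) ≤ p.length ∨ ((u - v : Fin n) : ℕ) ≤ p.length := by
  induction p with
  | @nil u => have := Fin.val_sub_cases u u; simp only [Walk.length_nil]; omega
  | @cons u w v huw q ih =>
    rw [cycleGraph_adj'] at huw
    have := Fin.val_sub_cases v u; have := Fin.val_sub_cases u v
    have := Fin.val_sub_cases v w; have := Fin.val_sub_cases w v
    have := Fin.val_sub_cases u w; have := Fin.val_sub_cases w u
    have := u.isLt; have := v.isLt; have := w.isLt
    rw [Walk.length_cons]
    omega

theorem cycleGraph_edist_le_iff {n d : ℕ} (u v : Fin n) :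
    (cycleGraph n).edist u v ≤ d ↔ ((v - u : Fin n) : ℕ) ≤ d ∨ ((u - v : Fin n) : ℕ) ≤ d := by
  constructor
  · intro h
    obtain ⟨p, hp⟩ := exists_walk_of_edist_ne_top (ne_top_of_le_ne_top (by simp) h)
    have hlen : p.length ≤ d := by exact_mod_cast hp ▸ h
    exact (cycleGraph_walk_length_ge p).imp (·.trans hlen) (·.trans hlen)
  · rintro (h | h)
    · exact (cycleGraph_edist_le_val_sub u v).trans (by exact_mod_cast h)
    · exact edist_comm ▸ (cycleGraph_edist_le_val_sub v u).trans (by exact_mod_cast h)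

theorem cycleGraph_power_adj_of_val_eq_zero {n d : ℕ} (hdn : d < n) {v₀ : Fin n}
    (hv₀ : (v₀ : ℕ) = 0) (x : Fin n) :
    ((cycleGraph n).power d).Adj v₀ x ↔ n - d ≤ (x : ℕ) ∨ (1 ≤ (x : ℕ) ∧ (x : ℕ) ≤ d) := by
  change v₀ ≠ x ∧ _ ↔ _
  rw [cycleGraph_edist_le_iff, Ne, Fin.ext_iff, hv₀]
  have := Fin.val_sub_cases x v₀; have := Fin.val_sub_cases v₀ x; have := x.isLt
  omega

end SimpleGraph

/-- Vertices are zero-indexed by `Fin n`: the paper's vertex `j` is `j - 1` here. -/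
theorem edgeIdeal_power_cycle_splitting (𝕜 : Type) [Field 𝕜] (n d : ℕ)
    (hd : 1 ≤ d) (hn : 2 * d + 2 ≤ n)
    (G : SimpleGraph (Fin n)) (hG : G = (SimpleGraph.cycleGraph n).power d)
    (v₀ v₁ : Fin n) (hv₀ : (v₀ : ℕ) = 0) (hv₁ : (v₁ : ℕ) = 1)
    (I J K L M : Ideal (MvPolynomial (Fin n) 𝕜))
    (hI : I = edgeIdeal 𝕜 G)
    (hJ : J = inducedEdgeIdeal 𝕜 G {v | v ≠ v₀})
    (hK : K = Ideal.span (X '' {j : Fin n | n - d ≤ (j : ℕ) ∨ (1 ≤ (j : ℕ) ∧ (j : ℕ) ≤ d)}))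
    (hL : L =
      (∑ j ∈ Finset.univ.filter (fun j : Fin n => 2 ≤ (j : ℕ) ∧ (j : ℕ) ≤ d),
        Ideal.span {X j} * (nbrIdeal 𝕜 G j {v₀, v₁} + outsideNbhdEdgeIdeal 𝕜 G {v₀, j}))
      + (∑ j ∈ Finset.univ.filter (fun j : Fin n => n - d ≤ (j : ℕ)),
        Ideal.span {X j} * (nbrIdeal 𝕜 G j {v₀, v₁} + outsideNbhdEdgeIdeal 𝕜 G {v₀, j})))
    (hM : M = nbrIdeal 𝕜 G v₁ {v₀} + outsideNbhdEdgeIdeal 𝕜 G {v₀, v₁}) :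
    I = J + Ideal.span {X v₀} * K ∧ J ⊓ K = L + Ideal.span {X v₁} * M := by
  classical
  subst hI hJ hK hL hM
  have hN : ∀ x, G.Adj v₀ x ↔ n - d ≤ (x : ℕ) ∨ (1 ≤ (x : ℕ) ∧ (x : ℕ) ≤ d) :=
    hG ▸ SimpleGraph.cycleGraph_power_adj_of_val_eq_zero (by omega) hv₀
  have hN_eq : G.neighborSet v₀ = {j : Fin n | n - d ≤ (j : ℕ) ∨ (1 ≤ (j : ℕ) ∧ (j : ℕ) ≤ d)} :=
    Set.ext hN
  have hdisj : Disjoint (Finset.univ.filter fun j : Fin n => 2 ≤ (j : ℕ) ∧ (j : ℕ) ≤ d)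
      (Finset.univ.filter fun j : Fin n => n - d ≤ (j : ℕ)) :=
    Finset.disjoint_filter.2 fun _ _ _ => by omega
  have hunion : (Finset.univ.filter fun j : Fin n => 2 ≤ (j : ℕ) ∧ (j : ℕ) ≤ d) ∪
      (Finset.univ.filter fun j : Fin n => n - d ≤ (j : ℕ)) = (G.neighborFinset v₀).erase v₁ := by
    ext j
    simp only [Finset.mem_union, Finset.mem_filter, Finset.mem_univ, true_and, Finset.mem_erase,
      SimpleGraph.mem_neighborFinset, hN, ne_eq, Fin.ext_iff, hv₁]
    omega
  refine ⟨?_, ?_⟩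
  · rw [← hN_eq]
    exact edgeIdeal_eq_add_span_X_mul_span_neighborSet G v₀
  · rw [← hN_eq, ← Finset.sum_union hdisj, hunion]
    exact inducedEdgeIdeal_inf_span_neighborSet G ((hN v₁).2 (by omega))
end
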